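/- arXiv:2504.18443 — 6 statements merged into one kernel-verified Lean document; each statement's English description precedes it below -/
import Mathlib

section
/- Let Π = ⟨V, A, I, G⟩ be a STRIPS planning task and B ∈ ℕ. Suppose Φ is a set of state–cost pairs ⟨s, c⟩ with s ⊆ V and c ∈ ℕ satisfying: (i) ⟨I, 0⟩ ∈ Φ; (ii) for every ⟨s, c⟩ ∈ Φ and every action a ∈ A applicable in s with c + cost(a) < B, the pair ⟨s⟦a⟧, c + cost(a)⟩ ∈ Φ; (iii) for every ⟨s, c⟩ ∈ Φ with G ⊆ s, c ≥ B. Then Π has no plan π with cost(π) < B. -/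
/-- A STRIPS action over variable type `V`: preconditions, add effects,
delete effects (disjoint from add effects), and a natural-number cost. -/
structure StripsAction (V : Type*) where
  pre : Set V
  add : Set V
  del : Set V
  cost : ℕ
  del_disj : Disjoint del add

variable {V : Type*}

/-- An action is applicable in a state if its preconditions hold. -/
def StripsAction.applicable (a : StripsAction V) (s : Set V) : Prop := a.pre ⊆ s

/-- The successor state `s⟦a⟧ = (s \ del(a)) ∪ add(a)`. -/
def StripsAction.app (a : StripsAction V) (s : Set V) : Set V := (s \ a.del) ∪ a.add

/-- Result of applying a sequence of actions. -/
def appSeq : Set V → List (StripsAction V) → Set V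
  | s, [] => s
  | s, a :: π => appSeq (a.app s) π

/-- A sequence of actions is successively applicable from a state. -/
def applicableSeq : Set V → List (StripsAction V) → Prop
  | _, [] => True
  | s, a :: π => a.applicable s ∧ applicableSeq (a.app s) π

/-- Cost of an action sequence. -/
def seqCost (π : List (StripsAction V)) : ℕ := (π.map StripsAction.cost).sum

/-- A STRIPS planning task: a set of actions, initial state, and goal. -/
structure StripsTask (V : Type*) where
  acts : Set (StripsAction V)
  init : Set V
  goal : Set V

/-- `π` is a plan for state `s`: all its actions belong to the task, it is
applicable from `s`, and the resulting state satisfies the goal. -/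
def StripsTask.IsPlanFrom (T : StripsTask V) (s : Set V) (π : List (StripsAction V)) : Prop :=
  (∀ a ∈ π, a ∈ T.acts) ∧ applicableSeq s π ∧ T.goal ⊆ appSeq s π

/-- A plan for the task is a plan for its initial state. -/
def StripsTask.IsPlan (T : StripsTask V) (π : List (StripsAction V)) : Prop := T.IsPlanFrom T.init π

/-- The abstract action `a^α` induced by pattern `P`. -/
def StripsAction.abs (a : StripsAction V) (P : Set V) : StripsAction V where
  pre := a.pre ∩ P
  add := a.add ∩ P
  del := a.del ∩ P
  cost := a.cost
  del_disj := a.del_disj.mono Set.inter_subset_left Set.inter_subset_left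

/-- The abstract task `⟨P, {a^α | a ∈ A}, sα, G ∩ P⟩`. -/
def StripsTask.absTask (T : StripsTask V) (P : Set V) (sα : Set V) : StripsTask V where
  acts := (fun a => a.abs P) '' T.acts
  init := sα
  goal := T.goal ∩ P

/-- Abstract goal distance: infimum (in `ℕ∞`) of costs of abstract plans
for `sα` in the abstract task induced by pattern `P`. -/
noncomputable def absDist (T : StripsTask V) (P : Set V) (sα : Set V) : ℕ∞ :=
  sInf {c : ℕ∞ | ∃ π : List (StripsAction V), (T.absTask P sα).IsPlan π ∧ c = (seqCost π : ℕ∞)}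

/-- `Vm` is an hmax value function for state `s`: variables in `s` have value 0,
and any other variable's value is the infimum over achievers `a` of
`cost(a) + max_{p ∈ pre(a)} Vm(p)` (max over the empty set is 0,
infimum over the empty set is ∞). -/
def IsHmaxVal (T : StripsTask V) (s : Set V) (Vm : V → ℕ∞) : Prop :=
  (∀ v ∈ s, Vm v = 0) ∧
  ∀ v ∉ s, Vm v =
    sInf {c : ℕ∞ | ∃ a ∈ T.acts, v ∈ a.add ∧ c = (a.cost : ℕ∞) + sSup (Vm '' a.pre)}

/-- Soundness of lower-bound certificates: an inductive overapproximation Φ of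
reachable state–cost pairs whose goal pairs all cost at least B rules out any
plan of cost below B. -/
theorem stmt0 [Fintype V] (T : StripsTask V) (hA : T.acts.Finite) (B : ℕ)
    (Φ : Set (Set V × ℕ))
    (hinit : (T.init, 0) ∈ Φ)
    (hind : ∀ s c, (s, c) ∈ Φ → ∀ a ∈ T.acts, a.applicable s → c + a.cost < B →
      (a.app s, c + a.cost) ∈ Φ)
    (hgoal : ∀ s c, (s, c) ∈ Φ → T.goal ⊆ s → B ≤ c) :
    ¬ ∃ π : List (StripsAction V), T.IsPlan π ∧ seqCost π < B := by
  rintro ⟨π, ⟨hacts, happ, hgoalsub⟩, hcost⟩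
  suffices h : ∀ (π : List (StripsAction V)) (s : Set V) (c : ℕ), (s, c) ∈ Φ →
      (∀ a ∈ π, a ∈ T.acts) → applicableSeq s π → T.goal ⊆ appSeq s π →
      c + seqCost π < B → False by
    exact h π T.init 0 hinit hacts happ hgoalsub (by simpa using hcost)
  intro π
  induction π with
  | nil =>
    intro s c hΦ _ _ hg hlt
    exact absurd (hgoal s c hΦ hg) (by simp [seqCost] at hlt; omega)
  | cons a π ih =>
    intro s c hΦ hacts happ hg hlt
    have hcost : seqCost (a :: π) = a.cost + seqCost π := by simp [seqCost]
    have hlt' : c + a.cost < B := by omega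
    exact ih (a.app s) (c + a.cost)
      (hind s c hΦ a (hacts a (by simp)) happ.1 hlt')
      (fun b hb => hacts b (by simp [hb])) happ.2 hg (by omega)
end

section
/- Let Π = ⟨V, A, I, G⟩ be a STRIPS planning task, B ∈ ℕ, and consider an A* run record (Closed, Open, (M_s)) with heuristic certificate sets, i.e., for each ⟨s, g, h⟩ ∈ Open the set M_s satisfies: (H1) ⟨s, c⟩ ∈ M_s for every c ∈ ℕ with c + h ≥ B; (H2) for every ⟨ŝ, ĉ⟩ ∈ M_s and every action a applicable in ŝ with ĉ + cost(a) < B, ⟨ŝ⟦a⟧, ĉ + cost(a)⟩ ∈ M_s; (H3) there is no ⟨ŝ, ĉ⟩ ∈ M_s with G ⊆ ŝ and ĉ < B. Suppose furthermore: (A1) ⟨I, 0⟩ ∈ Closed; (A2) for every ⟨s, g⟩ ∈ Closed with G ⊆ s, g ≥ B; (A3) for every ⟨s, g⟩ ∈ Closed and every action a applicable in s with g + cost(a) < B, either there is ⟨s⟦a⟧, ĝ⟩ ∈ Closed with ĝ ≤ g + cost(a), or there is ⟨s⟦a⟧, g', h'⟩ ∈ Open with g + cost(a) + h' ≥ B.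 Then Π has no plan π with cost(π) < B. -/
variable {V : Type*}

/-- Soundness of the A* lower-bound certificate: a terminated A* run record
(Closed, Open, (M_s)) satisfying the heuristic certificate conditions (H1)–(H3)
and the search conditions (A1)–(A3) rules out any plan of cost below B. -/
theorem stmt3 [Fintype V] (T : StripsTask V) (hA : T.acts.Finite) (B : ℕ)
    (Closed : Set (Set V × ℕ)) (opn : Set (Set V × ℕ × ℕ))
    (M : Set V → Set (Set V × ℕ))
    (hH1 : ∀ s g h, (s, g, h) ∈ opn → ∀ c : ℕ, B ≤ c + h → (s, c) ∈ M s)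
    (hH2 : ∀ s g h, (s, g, h) ∈ opn → ∀ s' c', (s', c') ∈ M s →
      ∀ a ∈ T.acts, a.applicable s' → c' + a.cost < B → (a.app s', c' + a.cost) ∈ M s)
    (hH3 : ∀ s g h, (s, g, h) ∈ opn → ∀ s' c', (s', c') ∈ M s → T.goal ⊆ s' → B ≤ c')
    (hA1 : (T.init, 0) ∈ Closed)
    (hA2 : ∀ s g, (s, g) ∈ Closed → T.goal ⊆ s → B ≤ g)
    (hA3 : ∀ s g, (s, g) ∈ Closed → ∀ a ∈ T.acts, a.applicable s → g + a.cost < B →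
      (∃ g2, (a.app s, g2) ∈ Closed ∧ g2 ≤ g + a.cost) ∨
      (∃ g' h', (a.app s, g', h') ∈ opn ∧ B ≤ g + a.cost + h')) :
    ¬ ∃ π : List (StripsAction V), T.IsPlan π ∧ seqCost π < B := by
  -- open-node case
  have hopen : ∀ (π : List (StripsAction V)) s0 g0 h0, (s0, g0, h0) ∈ opn →
      ∀ s' c', (s', c') ∈ M s0 → T.IsPlanFrom s' π → c' + seqCost π < B → False := by
    intro π
    induction π with
    | nil =>
      intro s0 g0 h0 ho s' c' hM hP hlt
      have := hH3 s0 g0 h0 ho s' c' hM hP.2.2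
      simp [seqCost] at hlt
      omega
    | cons a π ih =>
      intro s0 g0 h0 ho s' c' hM hP hlt
      obtain ⟨hacts, ⟨happ, hseq⟩, hgoal⟩ := hP
      have hc : seqCost (a :: π) = a.cost + seqCost π := by simp [seqCost]
      have h1 : c' + a.cost < B := by omega
      have hM' := hH2 s0 g0 h0 ho s' c' hM a (hacts a (by simp)) happ h1
      exact ih s0 g0 h0 ho (a.app s') (c' + a.cost) hM'
        ⟨fun b hb => hacts b (by simp [hb]), hseq, hgoal⟩ (by omega)
  -- closed-node case
  have hclosed : ∀ (π : List (StripsAction V)) s g, (s, g) ∈ Closed →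
      T.IsPlanFrom s π → g + seqCost π < B → False := by
    intro π
    induction π with
    | nil =>
      intro s g hC hP hlt
      have := hA2 s g hC hP.2.2
      simp [seqCost] at hlt
      omega
    | cons a π ih =>
      intro s g hC hP hlt
      obtain ⟨hacts, ⟨happ, hseq⟩, hgoal⟩ := hP
      have hc : seqCost (a :: π) = a.cost + seqCost π := by simp [seqCost]
      have h1 : g + a.cost < B := by omega
      rcases hA3 s g hC a (hacts a (by simp)) happ h1 with ⟨g2, hC2, hle⟩ | ⟨g', h', ho, hB⟩
      · exact ih (a.app s) g2 hC2 ⟨fun b hb => hacts b (by simp [hb]), hseq, hgoal⟩ (by omega)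
      · have hM := hH1 (a.app s) g' h' ho (g + a.cost) (by omega)
        exact hopen π (a.app s) g' h' ho (a.app s) (g + a.cost) hM
          ⟨fun b hb => hacts b (by simp [hb]), hseq, hgoal⟩ (by omega)
  rintro ⟨π, hP, hlt⟩
  exact hclosed π T.init 0 hA1 hP (by omega)
end

section
/- Let Π = ⟨V, A, I, G⟩ be a STRIPS planning task, B ∈ ℕ, and consider an A* run record (Closed, Open, (M_s)) such that: (H1) for each ⟨s, g, h⟩ ∈ Open, ⟨s, c⟩ ∈ M_s for every c ∈ ℕ with c + h ≥ B; and (A3) for every ⟨s, g⟩ ∈ Closed and every action a applicable in s with g + cost(a) < B, either there is ⟨s⟦a⟧, ĝ⟩ ∈ Closed with ĝ ≤ g + cost(a), or there is ⟨s⟦a⟧, g', h'⟩ ∈ Open with g + cost(a) + h' ≥ B. Define Φ = { ⟨ŝ, ĉ⟩ | there is g ≤ ĉ with ⟨ŝ, g⟩ ∈ Closed } ∪ ⋃_{⟨s,g,h⟩ ∈ Open} M_s. Then for every ⟨s, g⟩ ∈ Closed and every action a applicable in s with g + cost(a) < B, the pair ⟨s⟦a⟧, g + cost(a)⟩ ∈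 Φ. -/
variable {V : Type*}

/-- Expanded-action lemma for the A* invariant: applying an action to a closed
state within the cost bound leads into the A* invariant Φ. -/
theorem stmt4 [Fintype V] (T : StripsTask V) (hA : T.acts.Finite) (B : ℕ)
    (Closed : Set (Set V × ℕ)) (opn : Set (Set V × ℕ × ℕ))
    (M : Set V → Set (Set V × ℕ))
    (hH1 : ∀ s g h, (s, g, h) ∈ opn → ∀ c : ℕ, B ≤ c + h → (s, c) ∈ M s)
    (hA3 : ∀ s g, (s, g) ∈ Closed → ∀ a ∈ T.acts, a.applicable s → g + a.cost < B →
      (∃ g2, (a.app s, g2) ∈ Closed ∧ g2 ≤ g + a.cost) ∨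
      (∃ g' h', (a.app s, g', h') ∈ opn ∧ B ≤ g + a.cost + h'))
    (Φ : Set (Set V × ℕ))
    (hΦ : Φ = {p : Set V × ℕ | ∃ g ≤ p.2, (p.1, g) ∈ Closed} ∪ ⋃ x ∈ opn, M x.1) :
    ∀ s g, (s, g) ∈ Closed → ∀ a ∈ T.acts, a.applicable s → g + a.cost < B →
      (a.app s, g + a.cost) ∈ Φ := by
  intro s g hsg a ha happ hlt
  rcases hA3 s g hsg a ha happ hlt with ⟨g2, hc, hle⟩ | ⟨g', h', ho, hB⟩
  · rw [hΦ]; left; exact ⟨g2, hle, hc⟩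
  · rw [hΦ]; right
    exact Set.mem_biUnion ho (hH1 _ _ _ ho _ hB)
end

section
/- Let Π = ⟨V, A, I, G⟩ be a STRIPS planning task, P ⊆ V a pattern, and s ⊆ V a state. If π = a₁, …, aₙ is a plan for s in Π, then the induced abstract action sequence π^α = a₁^α, …, aₙ^α is a plan for α(s) in the abstract task ⟨P, {a^α | a ∈ A}, α(s), G ∩ P⟩ with cost(π^α) = cost(π). Consequently the abstract goal distance satisfies d(α(s)) ≤ cost(π), i.e., the pattern database heuristic h(s) = d(α(s)) is admissible. -/
variable {V : Type*}

lemma abs_app (a : StripsAction V) (P s : Set V) :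
    (a.abs P).app (s ∩ P) = a.app s ∩ P := by
  simp only [StripsAction.app, StripsAction.abs, Set.union_inter_distrib_right]
  congr 1
  ext x; simp [Set.mem_diff]; tauto

lemma abs_appSeq (P : Set V) : ∀ (π : List (StripsAction V)) (s : Set V),
    appSeq (s ∩ P) (π.map (fun a => a.abs P)) = appSeq s π ∩ P
  | [], s => rfl
  | a :: π, s => by
      simp only [List.map_cons, appSeq, abs_app]
      exact abs_appSeq P π _

lemma abs_applicableSeq (P : Set V) : ∀ (π : List (StripsAction V)) (s : Set V),
    applicableSeq s π → applicableSeq (s ∩ P) (π.map (fun a => a.abs P))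
  | [], s, _ => trivial
  | a :: π, s, h => by
      refine ⟨Set.inter_subset_inter_left P h.1, ?_⟩
      rw [abs_app]
      exact abs_applicableSeq P π _ h.2

lemma abs_seqCost (P : Set V) (π : List (StripsAction V)) :
    seqCost (π.map (fun a => a.abs P)) = seqCost π := by
  simp [seqCost, Function.comp]; rfl

/-- Admissibility of PDB heuristics: a concrete plan for `s` induces an abstract
plan for `α(s)` of equal cost, hence `d(α(s)) ≤ cost(π)`. -/
theorem stmt6 [Fintype V] (T : StripsTask V) (hA : T.acts.Finite) (P : Set V) (s : Set V)
    (π : List (StripsAction V)) (hπ : T.IsPlanFrom s π) :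
    (T.absTask P (s ∩ P)).IsPlan (π.map (fun a => a.abs P)) ∧
    seqCost (π.map (fun a => a.abs P)) = seqCost π ∧
    absDist T P (s ∩ P) ≤ (seqCost π : ℕ∞) := by
  obtain ⟨hmem, happ, hgoal⟩ := hπ
  have hplan : (T.absTask P (s ∩ P)).IsPlan (π.map (fun a => a.abs P)) := by
    refine ⟨?_, ?_, ?_⟩
    · intro b hb
      obtain ⟨a, ha, rfl⟩ := List.mem_map.1 hb
      exact ⟨a, hmem a ha, rfl⟩
    · exact abs_applicableSeq P π s happ
    · show T.goal ∩ P ⊆ _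
      rw [show (T.absTask P (s ∩ P)).init = s ∩ P from rfl, abs_appSeq]
      exact Set.inter_subset_inter_left P hgoal
  refine ⟨hplan, abs_seqCost P π, ?_⟩
  rw [← abs_seqCost P π]
  exact sInf_le ⟨π.map (fun a => a.abs P), hplan, rfl⟩
end

section
/- Let Π = ⟨V, A, I, G⟩ be a STRIPS planning task, s ⊆ V a state, and Vmax an hmax value function for s. For every action sequence π applicable from s and every variable v ∈ s⟦π⟧, it holds that Vmax(v) ≤ cost(π) in ℕ∞. In particular, if π is a plan for s, then hmax(s) ≤ cost(π), i.e., the maximum heuristic is admissible. -/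
variable {V : Type*}

lemma appSeq_append (s : Set V) (π₁ π₂ : List (StripsAction V)) :
    appSeq s (π₁ ++ π₂) = appSeq (appSeq s π₁) π₂ := by
  induction π₁ generalizing s with
  | nil => rfl
  | cons a t ih => simp [appSeq, ih]

lemma applicableSeq_append (s : Set V) (π₁ π₂ : List (StripsAction V)) :
    applicableSeq s (π₁ ++ π₂) ↔ applicableSeq s π₁ ∧ applicableSeq (appSeq s π₁) π₂ := by
  induction π₁ generalizing s with
  | nil => simp [applicableSeq, appSeq]
  | cons a t ih => simp [applicableSeq, appSeq, ih, and_assoc]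

lemma seqCost_append (π₁ π₂ : List (StripsAction V)) :
    seqCost (π₁ ++ π₂) = seqCost π₁ + seqCost π₂ := by
  simp [seqCost]

/-- Admissibility of hmax: for every action sequence π applicable from s and
variable v true after π, `Vmax(v) ≤ cost(π)`; in particular, if π is a plan
for s then `hmax(s) = max_{v ∈ G} Vmax(v) ≤ cost(π)`. -/
theorem stmt12 [Fintype V] (T : StripsTask V) (hA : T.acts.Finite) (s : Set V)
    (Vm : V → ℕ∞) (hVm : IsHmaxVal T s Vm) :
    (∀ π : List (StripsAction V), (∀ a ∈ π, a ∈ T.acts) → applicableSeq s π →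
      ∀ v ∈ appSeq s π, Vm v ≤ (seqCost π : ℕ∞)) ∧
    (∀ π : List (StripsAction V), T.IsPlanFrom s π →
      sSup (Vm '' T.goal) ≤ (seqCost π : ℕ∞)) := by
  obtain ⟨h0, hrec⟩ := hVm
  have main : ∀ π : List (StripsAction V), (∀ a ∈ π, a ∈ T.acts) → applicableSeq s π →
      ∀ v ∈ appSeq s π, Vm v ≤ (seqCost π : ℕ∞) := by
    intro π
    induction π using List.reverseRecOn with
    | nil =>
      intro _ _ v hv
      simp [appSeq] at hv
      simp [h0 v hv, seqCost]
    | append_singleton π a ih =>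
      intro hmem happ v hv
      have hmem' : ∀ b ∈ π, b ∈ T.acts := fun b hb => hmem b (by simp [hb])
      rw [applicableSeq_append] at happ
      obtain ⟨happ₁, happ₂⟩ := happ
      rw [appSeq_append] at hv
      have ha : a.applicable (appSeq s π) := happ₂.1
      have hcost : (seqCost (π ++ [a]) : ℕ∞) = (seqCost π : ℕ∞) + (a.cost : ℕ∞) := by
        rw [seqCost_append]; push_cast; simp [seqCost]
      rcases hv with hv | hv
      · calc Vm v ≤ (seqCost π : ℕ∞) := ih hmem' happ₁ v hv.1
          _ ≤ _ := by rw [hcost]; exact le_self_add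
      · by_cases hvs : v ∈ s
        · simp [h0 v hvs]
        · rw [hrec v hvs]
          have hsup : sSup (Vm '' a.pre) ≤ (seqCost π : ℕ∞) := by
            apply sSup_le
            rintro c ⟨p, hp, rfl⟩
            exact ih hmem' happ₁ p (ha hp)
          calc sInf {c : ℕ∞ | ∃ a ∈ T.acts, v ∈ a.add ∧ c = (a.cost : ℕ∞) + sSup (Vm '' a.pre)}
              ≤ (a.cost : ℕ∞) + sSup (Vm '' a.pre) :=
                sInf_le ⟨a, hmem a (by simp), hv, rfl⟩
            _ ≤ (a.cost : ℕ∞) + (seqCost π : ℕ∞) := by gcongr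
            _ = (seqCost (π ++ [a]) : ℕ∞) := by rw [hcost, add_comm]
  refine ⟨main, ?_⟩
  rintro π ⟨hmem, happ, hgoal⟩
  apply sSup_le
  rintro c ⟨v, hv, rfl⟩
  exact main π hmem happ v (hgoal hv)
end

section
/- Let Π = ⟨V, A, I, G⟩ be a STRIPS planning task, B ∈ ℕ, s ⊆ V a state, Vmax an hmax value function for s with hmax(s) = H ∈ ℕ finite, and let Wmax(v) = min(Vmax(v), H) ∈ ℕ. Define Φ_max as the set of state–cost pairs ⟨ŝ, ĉ⟩ with ŝ ⊆ V, ĉ ∈ ℕ, such that ĉ + H ≥ B and, for every v ∈ ŝ, ĉ + H ≥ B + Wmax(v). If ⟨ŝ, ĉ⟩ ∈ Φ_max, action a ∈ A is applicable in ŝ, and ĉ + cost(a) < B, then ⟨ŝ⟦a⟧, ĉ + cost(a)⟩ ∈ Φ_max. -/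
variable {V : Type*}

/-! Every precondition `p` of `a` holds in `ŝ`; since `ĉ < B`, its bound `B + Wmax(p) ≤ ĉ + H`
forces `Vmax(p) < H`, hence `Vmax(p) ≤ ĉ + H - B`. The hmax equation then bounds each added
variable by `cost(a) + ĉ + H - B`, while variables kept from `ŝ` only profit from the larger cost. -/

theorem IsHmaxVal.le_cost_add_sSup_pre {T : StripsTask V} {s : Set V} {Vm : V → ℕ∞}
    (hVm : IsHmaxVal T s Vm) {a : StripsAction V} (ha : a ∈ T.acts) {v : V} (hv : v ∈ a.add) :
    Vm v ≤ a.cost + sSup (Vm '' a.pre) := by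
  by_cases hs : v ∈ s
  · simp [hVm.1 v hs]
  · rw [hVm.2 v hs]
    exact sInf_le ⟨a, ha, hv, rfl⟩

theorem ENat.le_sub_of_add_min_le {x : ℕ∞} {B c H : ℕ} (hcB : c < B)
    (h : (B : ℕ∞) + min x H ≤ c + H) : x ≤ ((c + H - B : ℕ) : ℕ∞) := by
  rcases le_total x H with hxH | hHx
  · lift x to ℕ using ne_top_of_le_ne_top (ENat.natCast_ne_top H) hxH
    rw [min_eq_left hxH] at h
    have : B + x ≤ c + H := by exact_mod_cast h
    exact_mod_cast (by omega : x ≤ c + H - B)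
  · rw [min_eq_right hHx] at h
    have : B + H ≤ c + H := by exact_mod_cast h
    omega

theorem stmt16_general (T : StripsTask V) (B : ℕ) (s : Set V) (Vm : V → ℕ∞)
    (hVm : IsHmaxVal T s Vm) (H : ℕ)
    (t : Set V) (c : ℕ)
    (hmem : (B : ℕ∞) ≤ (c : ℕ∞) + (H : ℕ∞) ∧
      ∀ v ∈ t, (B : ℕ∞) + min (Vm v) (H : ℕ∞) ≤ (c : ℕ∞) + (H : ℕ∞))
    (a : StripsAction V) (ha : a ∈ T.acts) (happ : a.applicable t)
    (hlt : c + a.cost < B) :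
    (B : ℕ∞) ≤ ((c + a.cost : ℕ) : ℕ∞) + (H : ℕ∞) ∧
      ∀ v ∈ a.app t,
        (B : ℕ∞) + min (Vm v) (H : ℕ∞) ≤ ((c + a.cost : ℕ) : ℕ∞) + (H : ℕ∞) := by
  obtain ⟨hB, hbound⟩ := hmem
  have hcH : (c : ℕ∞) + H ≤ ((c + a.cost : ℕ) : ℕ∞) + H := by
    gcongr
    exact_mod_cast Nat.le_add_right c a.cost
  refine ⟨hB.trans hcH, ?_⟩
  rintro v (⟨hvt, -⟩ | hva)
  · exact (hbound v hvt).trans hcH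
  · have hpre : sSup (Vm '' a.pre) ≤ ((c + H - B : ℕ) : ℕ∞) := by
      refine sSup_le ?_
      rintro _ ⟨p, hp, rfl⟩
      exact ENat.le_sub_of_add_min_le (by omega) (hbound p (happ hp))
    have hBcH : B ≤ c + H := by exact_mod_cast hB
    calc (B : ℕ∞) + min (Vm v) H ≤ B + (a.cost + ((c + H - B : ℕ) : ℕ∞)) := by
          gcongr
          exact (min_le_left _ _).trans ((hVm.le_cost_add_sSup_pre ha hva).trans (by gcongr))
      _ = ((c + a.cost : ℕ) : ℕ∞) + H := by
          norm_cast
          omega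

/-- Inductivity lemma for the hmax certificate: with `H = hmax(s)` finite and
`Wmax(v) = min(Vmax(v), H)`, the set
`Φ_max = {⟨ŝ, ĉ⟩ | ĉ + H ≥ B and ∀ v ∈ ŝ, ĉ + H ≥ B + Wmax(v)}`
is closed under action applications that stay strictly below the bound `B`. -/
theorem stmt16 [Fintype V] (T : StripsTask V) (B : ℕ) (s : Set V) (Vm : V → ℕ∞)
    (hVm : IsHmaxVal T s Vm) (H : ℕ) (hH : sSup (Vm '' T.goal) = (H : ℕ∞))
    (t : Set V) (c : ℕ)
    (hmem : (B : ℕ∞) ≤ (c : ℕ∞) + (H : ℕ∞) ∧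
      ∀ v ∈ t, (B : ℕ∞) + min (Vm v) (H : ℕ∞) ≤ (c : ℕ∞) + (H : ℕ∞))
    (a : StripsAction V) (ha : a ∈ T.acts) (happ : a.applicable t)
    (hlt : c + a.cost < B) :
    (B : ℕ∞) ≤ ((c + a.cost : ℕ) : ℕ∞) + (H : ℕ∞) ∧
      ∀ v ∈ a.app t,
        (B : ℕ∞) + min (Vm v) (H : ℕ∞) ≤ ((c + a.cost : ℕ) : ℕ∞) + (H : ℕ∞) :=
  stmt16_general T B s Vm hVm H t c hmem a ha happ hlt
end
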